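/- Let T be a string of length n over an alphabet Σ, let i, j ∈ [0, n) with i ≥ j, and let T' = T[0..i]·T[j..n-1]. Let F denote the string T[j..i], i.e., the suffix of T[0..i] of length i - j + 1, which is simultaneously a prefix of T[j..n-1]. If T occurs at position j' of T' with 0 < j' and j' + n < |T'|, then both j' and q = |T'| - (j' + n) are periods of F, j' + q = |F|, and consequently g = gcd(j', q) is a period of F. -/
import Mathlib


universe u

/-- `X` occurs at position `k` in `Y`, i.e. `Y[k..k+|X|-1] = X`. -/
def occursAt {α : Type u} (X Y : List α) (k : ℕ) : Prop :=
  X <+: Y.drop k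

/-- `p > 0` is a period of `P`: `P[a] = P[a+p]` for all `a ∈ [0, |P|-p)`. -/
def IsPeriod {α : Type u} (P : List α) (p : ℕ) : Prop :=
  0 < p ∧ ∀ (a : ℕ) (h : a + p < P.length),
    P.get ⟨a, lt_of_le_of_lt (Nat.le_add_right a p) h⟩ = P.get ⟨a + p, h⟩

/-- `per(P)`: the smallest period of `P`. -/
noncomputable def minPeriod {α : Type u} (P : List α) : ℕ :=
  sInf {p | IsPeriod P p}

lemma isPeriod_iff {α : Type u} (P : List α) (p : ℕ) :
    IsPeriod P p ↔ 0 < p ∧ ∀ (a : ℕ) (h : a + p < P.length),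
      P[a]'(lt_of_le_of_lt (Nat.le_add_right a p) h) = P[a + p]'h := by
  simp [IsPeriod, List.get_eq_getElem]

lemma gE {α : Type u} (l : List α) {a b : ℕ} (hab : a = b) (ha : a < l.length)
    (hb : b < l.length) : l[a]'ha = l[b]'hb := by subst hab; rfl

lemma period_sub {α : Type u} (F : List α) (p q : ℕ) (hpq : p < q)
    (hsum : p + q ≤ F.length) (hp : IsPeriod F p) (hq : IsPeriod F q) :
    IsPeriod F (q - p) := by
  rw [isPeriod_iff] at hp hq ⊢
  refine ⟨by omega, fun a h => ?_⟩
  by_cases hc : a + q < F.length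
  · have h1 := hq.2 a hc
    have h2 := hp.2 (a + (q - p)) (by omega)
    exact h1.trans ((h2.trans (gE F (by omega) _ _)).symm)
  · have hap : p ≤ a := by omega
    have h1 := hp.2 (a - p) (by omega)
    have h2 := hq.2 (a - p) (by omega)
    exact (gE F (by omega) _ _).trans
      (h1.symm.trans (h2.trans (gE F (by omega) _ _)))

lemma gcd_period_le {α : Type u} (F : List α) : ∀ s p q, p + q = s → 0 < p → p ≤ q →
    p + q ≤ F.length → IsPeriod F p → IsPeriod F q → IsPeriod F (Nat.gcd p q) := by
  intro s
  induction s using Nat.strong_induction_on with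
  | _ s ih =>
    intro p q hs hp0 hpq hsum hp hq
    rcases eq_or_lt_of_le hpq with heq | hlt
    · subst heq; rwa [Nat.gcd_self]
    · have hsub := period_sub F p q hlt hsum hp hq
      rcases le_total p (q - p) with hle | hle
      · have := ih (p + (q - p)) (by omega) p (q - p) rfl hp0 hle (by omega) hp hsub
        rwa [Nat.gcd_sub_self_right hlt.le] at this
      · have := ih ((q - p) + p) (by omega) (q - p) p rfl (by omega) hle (by omega) hsub hp
        rwa [Nat.gcd_comm, Nat.gcd_sub_self_right hlt.le] at this

lemma gcd_period {α : Type u} (F : List α) (p q : ℕ) (hp0 : 0 < p) (hq0 : 0 < q)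
    (hsum : p + q ≤ F.length) (hp : IsPeriod F p) (hq : IsPeriod F q) :
    IsPeriod F (Nat.gcd p q) := by
  rcases le_total p q with h | h
  · exact gcd_period_le F (p + q) p q rfl hp0 h hsum hp hq
  · rw [Nat.gcd_comm]
    exact gcd_period_le F (q + p) q p rfl hq0 h (by omega) hq hp

/-- Let `F = T[j..i]` (a suffix of `T[0..i]` and a prefix of `T[j..n-1]`). If `T` occurs at
position `j'` of `T'` with `0 < j'` and `j' + n < |T'|`, then both `j'` and
`q = |T'| - (j' + n)` are periods of `F`, `j' + q = |F|`, and hence `gcd(j', q)` is a period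
of `F`. -/
theorem stmt7 {α : Type u} (T : List α) (n i j : ℕ)
    (hT : T.length = n) (hi : i < n) (hj : j < n) (hij : j ≤ i)
    (T' : List α) (hT' : T' = T.take (i + 1) ++ T.drop j)
    (F : List α) (hF : F = (T.take (i + 1)).drop j)
    (j' : ℕ) (hj'0 : 0 < j') (hocc : occursAt T T' j') (hlt : j' + n < T'.length)
    (q : ℕ) (hq : q = T'.length - (j' + n)) :
    IsPeriod F j' ∧ IsPeriod F q ∧ j' + q = F.length ∧ IsPeriod F (Nat.gcd j' q) := by
  have hlenT' : T'.length = (i + 1) + (n - j) := by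
    subst hT'; simp [hT]; omega
  have hlenF : F.length = i + 1 - j := by
    subst hF; simp [hT]; omega
  have hFlt : j' + q = F.length := by omega
  have hq0 : 0 < q := by omega
  have hFget : ∀ (a : ℕ) (h : a < F.length),
      F[a]'h = T[j + a]'(by omega) := by
    intro a h
    subst hF
    rw [List.getElem_drop, List.getElem_take]
  have hOcc : ∀ (m : ℕ) (h : m < n),
      T[m]'(by omega) = T'[j' + m]'(by omega) := by
    intro m h
    have := hocc.getElem (show m < T.length by omega)
    rw [this, List.getElem_drop]
  have hT1 : ∀ (k : ℕ) (h : k < i + 1),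
      T'[k]'(by omega) = T[k]'(by omega) := by
    intro k h
    subst hT'
    rw [List.getElem_append_left (by simp [hT]; omega), List.getElem_take]
  have hT2 : ∀ (k : ℕ) (h : k < n - j),
      T'[(i + 1) + k]'(by omega) = T[j + k]'(by omega) := by
    intro k h
    subst hT'
    rw [List.getElem_append_right (by simp only [List.length_take, hT]; omega), List.getElem_drop]
    exact gE T (by simp only [List.length_take, hT]; omega) _ _
  have hPj' : IsPeriod F j' := by
    rw [isPeriod_iff]
    refine ⟨hj'0, fun a h => ?_⟩
    have h1 := hOcc (j + a) (by omega)
    have h2 := hT1 (j' + (j + a)) (by omega)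
    exact (hFget a (by omega)).trans
      ((h1.trans (h2.trans (gE T (by omega) _ _))).trans (hFget (a + j') h).symm)
  have hPq : IsPeriod F q := by
    rw [isPeriod_iff]
    refine ⟨hq0, fun a h => ?_⟩
    have h1 := hOcc (j + q + a) (by omega)
    have h2 := hT2 a (by omega)
    have step : T[j + q + a]'(by omega) = T[j + a]'(by omega) :=
      h1.trans ((gE T' (by omega) _ _).trans h2)
    exact (hFget a (by omega)).trans
      ((step.symm.trans (gE T (by omega) _ _)).trans (hFget (a + q) h).symm)
  exact ⟨hPj', hPq, hFlt, gcd_period F j' q hj'0 hq0 (by omega) hPj' hPq⟩
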